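/- Let φ : ℝ² → [0,∞) be smooth, compactly supported, rotationally invariant, with ∫_{ℝ²} φ = 1. Then there exists a constant C < ∞ such that for every R ≥ 1, | ∫_{B_R} |(φ * θ)(w)|² dw − (log R)/(2π) | ≤ C, where B_R is the open ball of radius R centred at 0. In particular ∫_{B_R} |(φ * θ)(w)|² dw = (log R)/(2π) + O(1) as R → ∞. -/

import Mathlib

open MeasureTheory Real

/-- The vector field `θ(z) = (−z₂, z₁)/(2π|z|²)` on `ℝ² ≃ ℂ`. -/
noncomputable def theta (z : ℂ) : ℂ :=
  ((2 * Real.pi * ‖z‖ ^ 2)⁻¹ : ℝ) • (Complex.I * z)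

/-- The convolution `(φ * θ)(w) = ∫ φ(v) θ(w − v) dv`. -/
noncomputable def convTheta (φ : ℂ → ℝ) (w : ℂ) : ℂ :=
  ∫ v : ℂ, φ v • theta (w - v)

namespace Stmt14Aux

open Set Metric

lemma norm_theta (z : ℂ) : ‖theta z‖ = (2 * π)⁻¹ * ‖z‖⁻¹ := by
  rcases eq_or_ne z 0 with rfl | hz
  · simp [theta]
  · have hz' : (0:ℝ) < ‖z‖ := norm_pos_iff.2 hz
    rw [theta, norm_smul, Real.norm_eq_abs, abs_of_nonneg (by positivity), norm_mul,
      Complex.norm_I, one_mul]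
    have habs : ‖z‖ ≠ 0 := by simpa using hz'.ne'
    field_simp

lemma theta_eq (z : ℂ) : theta z = (2 * π)⁻¹ • (Complex.I * ((starRingEnd ℂ) z)⁻¹) := by
  rcases eq_or_ne z 0 with rfl | hz
  · simp [theta]
  · have hz' : (0:ℝ) < ‖z‖ := norm_pos_iff.2 hz
    have hnz : ((‖z‖ : ℂ)) ≠ 0 := by simpa using hz'.ne'
    have h1 : z * (starRingEnd ℂ) z = ((‖z‖ : ℂ)) ^ 2 := by
      rw [Complex.mul_conj]
      norm_cast
      rw [Complex.normSq_eq_norm_sq]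
    have hkey : ((starRingEnd ℂ) z)⁻¹ = z * ((‖z‖ : ℂ) ^ 2)⁻¹ := by
      refine inv_eq_of_mul_eq_one_left ?_
      rw [mul_assoc, mul_comm (((‖z‖ : ℂ) ^ 2)⁻¹), ← mul_assoc, h1]
      field_simp
    rw [theta, hkey, Complex.real_smul, Complex.real_smul]
    have h2 : ((‖z‖ : ℂ)) ^ 2 ≠ 0 := by simpa using hz'.ne'
    have hπ : ((π : ℂ)) ≠ 0 := by exact_mod_cast Real.pi_ne_zero
    push_cast
    field_simp

lemma conj_theta (z : ℂ) :
    (starRingEnd ℂ) (theta z) = -((2 * π)⁻¹ • (Complex.I * z⁻¹)) := by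
  rw [theta_eq, Complex.real_smul, Complex.real_smul, map_mul, map_mul, Complex.conj_I,
    map_inv₀, Complex.conj_conj, Complex.conj_ofReal]
  ring

lemma measurable_theta : Measurable theta := by
  apply Measurable.smul (f := fun z : ℂ => ((2 * Real.pi * ‖z‖ ^ 2)⁻¹ : ℝ)) (g := fun z : ℂ => Complex.I * z)
  · exact (((measurable_norm.pow_const 2).const_mul (2 * π)).inv)
  · exact measurable_const.mul measurable_id

lemma integrable_habs (R : ℝ) :
    Integrable ((Ico (-R) 0 ∪ Ioc 0 R).indicator (fun t : ℝ => |t| ^ (-(2:ℝ)⁻¹))) := by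
  rw [integrable_indicator_iff (measurableSet_Ico.union measurableSet_Ioc)]
  have hpos : IntegrableOn (fun t : ℝ => |t| ^ (-(2:ℝ)⁻¹)) (Ioc 0 R) := by
    have base : IntegrableOn (fun t : ℝ => t ^ (-(2:ℝ)⁻¹)) (Ioc 0 R) :=
      (intervalIntegral.intervalIntegrable_rpow' (by norm_num : (-1:ℝ) < -(2:ℝ)⁻¹)).1
    exact base.congr_fun (fun t ht => by rw [abs_of_pos ht.1]) measurableSet_Ioc
  apply IntegrableOn.union _ hpos
  have hind : Integrable ((Ioc (0:ℝ) R).indicator (fun t => |t| ^ (-(2:ℝ)⁻¹))) :=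
    (integrable_indicator_iff measurableSet_Ioc).2 hpos
  have hneg := hind.comp_neg
  have heq : (fun x : ℝ => (Ioc (0:ℝ) R).indicator (fun t => |t| ^ (-(2:ℝ)⁻¹)) (-x))
      = (Ico (-R) (0:ℝ)).indicator (fun t => |t| ^ (-(2:ℝ)⁻¹)) := by
    funext x
    by_cases hx : x ∈ Ico (-R) (0:ℝ)
    · have hx' : -x ∈ Ioc (0:ℝ) R := ⟨by linarith [hx.2], by linarith [hx.1]⟩
      rw [Set.indicator_of_mem hx, Set.indicator_of_mem hx', abs_neg]
    · have hx' : -x ∉ Ioc (0:ℝ) R := by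
        intro hmem
        exact hx ⟨by linarith [hmem.2], by linarith [hmem.1]⟩
      rw [Set.indicator_of_notMem hx, Set.indicator_of_notMem hx']
  rw [heq] at hneg
  exact (integrable_indicator_iff measurableSet_Ico).1 hneg

lemma ae_axes : ∀ᵐ z : ℂ, z.re ≠ 0 ∧ z.im ≠ 0 := by
  have hre : (volume : Measure ℂ) {z : ℂ | z.re = 0} = 0 := by
    have h : {z : ℂ | z.re = 0} = (LinearMap.ker Complex.reLm : Set ℂ) := by
      ext z; simp [LinearMap.mem_ker]
    rw [h]
    apply Measure.addHaar_submodule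
    rw [Ne, LinearMap.ker_eq_top]
    intro h'
    have : Complex.reLm 1 = (0 : ℂ →ₗ[ℝ] ℝ) 1 := by rw [h']
    simp at this
  have him : (volume : Measure ℂ) {z : ℂ | z.im = 0} = 0 := by
    have h : {z : ℂ | z.im = 0} = (LinearMap.ker Complex.imLm : Set ℂ) := by
      ext z; simp [LinearMap.mem_ker]
    rw [h]
    apply Measure.addHaar_submodule
    rw [Ne, LinearMap.ker_eq_top]
    intro h'
    have : Complex.imLm Complex.I = (0 : ℂ →ₗ[ℝ] ℝ) Complex.I := by rw [h']
    simp at this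
  have h1 : ∀ᵐ z : ℂ, z.re ≠ 0 := by
    rw [ae_iff]; simpa using hre
  have h2 : ∀ᵐ z : ℂ, z.im ≠ 0 := by
    rw [ae_iff]; simpa using him
  exact h1.and h2

lemma integrableOn_inv_norm (R : ℝ) :
    IntegrableOn (fun z : ℂ => ‖z‖⁻¹) (closedBall (0:ℂ) R) := by
  set h : ℝ → ℝ := (Ico (-R) 0 ∪ Ioc 0 R).indicator (fun t : ℝ => |t| ^ (-(2:ℝ)⁻¹)) with hh
  have hInt : Integrable h := integrable_habs R
  have hprod : Integrable (fun p : ℝ × ℝ => h p.1 * h p.2) := by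
    have := hInt.mul_prod hInt
    rwa [← Measure.volume_eq_prod] at this
  have hB : Integrable (fun z : ℂ => h z.re * h z.im) :=
    (Complex.volume_preserving_equiv_real_prod.integrable_comp_emb
      Complex.measurableEquivRealProd.measurableEmbedding).2 hprod
  refine Integrable.mono' hB.integrableOn (measurable_norm.inv.aestronglyMeasurable) ?_
  filter_upwards [ae_restrict_mem measurableSet_closedBall, ae_restrict_of_ae ae_axes]
    with z hz hax
  obtain ⟨hx, hy⟩ := hax
  have hzR : ‖z‖ ≤ R := by simpa using mem_closedBall_zero_iff.1 hz
  have hmemx : z.re ∈ Ico (-R) 0 ∪ Ioc 0 R := by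
    have : |z.re| ≤ R := le_trans (by simpa using Complex.abs_re_le_norm z) hzR
    rcases lt_or_gt_of_ne hx with hneg | hpos
    · exact Or.inl ⟨by cases abs_le.1 this; linarith, hneg⟩
    · exact Or.inr ⟨hpos, by cases abs_le.1 this; linarith⟩
  have hmemy : z.im ∈ Ico (-R) 0 ∪ Ioc 0 R := by
    have : |z.im| ≤ R := le_trans (by simpa using Complex.abs_im_le_norm z) hzR
    rcases lt_or_gt_of_ne hy with hneg | hpos
    · exact Or.inl ⟨by cases abs_le.1 this; linarith, hneg⟩
    · exact Or.inr ⟨hpos, by cases abs_le.1 this; linarith⟩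
  have hhx : h z.re = |z.re| ^ (-(2:ℝ)⁻¹) := Set.indicator_of_mem hmemx _
  have hhy : h z.im = |z.im| ^ (-(2:ℝ)⁻¹) := Set.indicator_of_mem hmemy _
  have habs : ‖(‖z‖⁻¹ : ℝ)‖ = ‖z‖⁻¹ := by
    rw [Real.norm_eq_abs, abs_of_nonneg (inv_nonneg.2 (norm_nonneg _))]
  rw [habs, hhx, hhy]
  have hxpos : 0 < |z.re| := abs_pos.2 hx
  have hypos : 0 < |z.im| := abs_pos.2 hy
  have h1 : |z.re| * |z.im| ≤ ‖z‖ ^ 2 := by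
    have hsq : ‖z‖ ^ 2 = z.re ^ 2 + z.im ^ 2 := by
      rw [Complex.sq_norm, Complex.normSq_apply]; ring
    nlinarith [sq_nonneg (|z.re| - |z.im|), sq_abs z.re, sq_abs z.im]
  have h2 : Real.sqrt (|z.re| * |z.im|) ≤ ‖z‖ := by
    have := Real.sqrt_le_sqrt h1
    rwa [Real.sqrt_sq (norm_nonneg z)] at this
  have h3 : 0 < Real.sqrt (|z.re| * |z.im|) := Real.sqrt_pos.2 (mul_pos hxpos hypos)
  have h4 : ‖z‖⁻¹ ≤ (Real.sqrt (|z.re| * |z.im|))⁻¹ := by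
    exact inv_anti₀ h3 h2
  refine h4.trans (le_of_eq ?_)
  rw [Real.sqrt_eq_rpow, ← Real.rpow_neg (by positivity),
    Real.mul_rpow (abs_nonneg _) (abs_nonneg _)]
  norm_num

lemma locInt_theta : LocallyIntegrable theta := by
  intro x
  refine ⟨closedBall 0 (‖x‖ + 1), ?_, ?_⟩
  · exact Metric.closedBall_mem_nhds_of_mem (mem_ball_zero_iff.2 (by linarith [norm_nonneg x]))
  · refine Integrable.mono' ((integrableOn_inv_norm (‖x‖+1)).const_mul ((2*π)⁻¹))
      measurable_theta.aestronglyMeasurable ?_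
    exact Filter.Eventually.of_forall fun z => le_of_eq (norm_theta z)

lemma cont_conv (φ : ℂ → ℝ) (hφ : Continuous φ) (hc : HasCompactSupport φ) :
    Continuous (convTheta φ) := by
  have h : convTheta φ = MeasureTheory.convolution φ theta (ContinuousLinearMap.lsmul ℝ ℝ) volume := by
    funext w
    rw [convTheta, MeasureTheory.convolution_def]
    simp only [ContinuousLinearMap.lsmul_apply]
  rw [h]
  exact hc.continuous_convolution_left _ hφ locInt_theta

lemma polar_symm_circleMap (p : ℝ × ℝ) :
    Complex.polarCoord.symm p = circleMap 0 p.1 p.2 := by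
  simp [Complex.polarCoord_symm_apply, circleMap, Complex.exp_mul_I,
    ← Complex.ofReal_cos, ← Complex.ofReal_sin]

lemma integral_circle_inv {w : ℂ} {r : ℝ} (h0 : 0 < r) (hr : r < ‖w‖) :
    ∫ θ in Ioo (-π) π, (w - Complex.polarCoord.symm (r, θ))⁻¹ = 2 * π / w := by
  have hw0 : w ≠ 0 := by
    intro h
    rw [h, norm_zero] at hr
    linarith
  set g : ℝ → ℂ := fun θ => (w - circleMap 0 r θ)⁻¹ with hg
  have hper : Function.Periodic g (2 * π) :=
    (periodic_circleMap 0 r).comp fun z => (w - z)⁻¹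
  have hzsph : ∀ z : ℂ, z ∈ Metric.sphere (0:ℂ) r → z ≠ 0 := by
    intro z hz h
    have hz' : ‖z‖ = r := by simpa using hz
    rw [h, norm_zero] at hz'
    exact h0.ne hz'
  have hwsph : ∀ z : ℂ, z ∈ Metric.closedBall (0:ℂ) r → w - z ≠ 0 := by
    intro z hz h
    have hz' : ‖z‖ ≤ r := by simpa using hz
    rw [sub_eq_zero] at h
    rw [← h] at hz'
    linarith
  have hci1 : CircleIntegrable (fun z : ℂ => z⁻¹) 0 r :=
    ContinuousOn.circleIntegrable h0.le
      (ContinuousOn.inv₀ continuousOn_id fun z hz => hzsph z hz)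
  have hci2 : CircleIntegrable (fun z : ℂ => (z - w)⁻¹) 0 r := by
    refine ContinuousOn.circleIntegrable h0.le
      (ContinuousOn.inv₀ (continuousOn_id.sub continuousOn_const)
        fun z hz => ?_)
    have := hwsph z (Metric.sphere_subset_closedBall hz)
    intro h
    apply this
    rw [sub_eq_zero] at h ⊢
    exact h.symm
  have key1 : (∮ z in C(0, r), z⁻¹) = 2 * π * Complex.I := by
    have h := circleIntegral.integral_sub_inv_of_mem_ball
      (Metric.mem_ball_self h0 : (0:ℂ) ∈ Metric.ball (0:ℂ) r)
    simpa using h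
  have hwsph' : ∀ z : ℂ, z ∈ Metric.closedBall (0:ℂ) r → z - w ≠ 0 := by
    intro z hz h
    apply hwsph z hz
    rw [sub_eq_zero] at h ⊢
    exact h.symm
  have key2 : (∮ z in C(0, r), (z - w)⁻¹) = 0 := by
    apply Complex.circleIntegral_eq_zero_of_differentiable_on_off_countable h0.le
      Set.countable_empty
    · exact ContinuousOn.inv₀ (continuousOn_id.sub continuousOn_const)
        fun z hz => hwsph' z hz
    · intro z hz
      exact (differentiableAt_id.sub (differentiableAt_const w)).inv
        (hwsph' z (Metric.ball_subset_closedBall hz.1))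
  have hfeq : Set.EqOn (fun z : ℂ => z⁻¹ * (w - z)⁻¹)
      (fun z => w⁻¹ • (z⁻¹ - (z - w)⁻¹)) (Metric.sphere 0 r) := by
    intro z hz
    have h1 := hzsph z hz
    have h2 := hwsph z (Metric.sphere_subset_closedBall hz)
    have h3 := hwsph' z (Metric.sphere_subset_closedBall hz)
    simp only [smul_eq_mul]
    field_simp
    ring
  have key : (∮ z in C(0, r), z⁻¹ * (w - z)⁻¹) = w⁻¹ * (2 * π * Complex.I) := by
    rw [circleIntegral.integral_congr h0.le hfeq, circleIntegral.integral_smul,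
      circleIntegral.integral_sub hci1 hci2, key1, key2, sub_zero, smul_eq_mul]
  have hunfold : (∮ z in C(0, r), z⁻¹ * (w - z)⁻¹)
      = ∫ θ in (0:ℝ)..(2*π), Complex.I * g θ := by
    unfold circleIntegral
    apply intervalIntegral.integral_congr
    intro θ _
    simp only [deriv_circleMap, smul_eq_mul, hg]
    have hne : circleMap 0 r θ ≠ 0 := circleMap_ne_center h0.ne'
    have hwz : w - circleMap 0 r θ ≠ 0 :=
      hwsph _ (circleMap_mem_closedBall 0 h0.le θ)
    field_simp
  have hI : (∫ θ in (0:ℝ)..(2*π), g θ) = 2 * π / w := by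
    have h2 : Complex.I * ∫ θ in (0:ℝ)..(2*π), g θ = w⁻¹ * (2 * π * Complex.I) := by
      rw [← intervalIntegral.integral_const_mul, ← hunfold, key]
    apply mul_left_cancel₀ Complex.I_ne_zero
    rw [h2]
    field_simp
  calc ∫ θ in Ioo (-π) π, (w - Complex.polarCoord.symm (r, θ))⁻¹
      = ∫ θ in Ioo (-π) π, g θ := by
        apply setIntegral_congr_fun measurableSet_Ioo
        intro θ _
        simp only [polar_symm_circleMap, hg]
    _ = ∫ θ in (-π)..π, g θ := by
        rw [intervalIntegral.integral_of_le (by linarith [Real.pi_pos]),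
          MeasureTheory.integral_Ioc_eq_integral_Ioo]
    _ = ∫ θ in (0:ℝ)..(2*π), g θ := by
        have h := hper.intervalIntegral_add_eq (-π) 0
        have e1 : -π + 2*π = π := by ring
        have e2 : (0:ℝ) + 2*π = 2*π := by ring
        rw [e1, e2] at h
        exact h
    _ = 2 * π / w := hI

lemma vol_ball_one : ((volume : Measure ℂ) (Metric.ball 0 1)).toReal = π := by
  rw [Complex.volume_ball]
  simp

lemma cauchy_transform (φ : ℂ → ℝ) (hφ : Continuous φ)
    (hrot : ∀ x y : ℂ, ‖x‖ = ‖y‖ → φ x = φ y)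
    {r₀ : ℝ} (hr₀ : 0 ≤ r₀) (hsupp : ∀ v : ℂ, r₀ < ‖v‖ → φ v = 0)
    {M : ℝ} (hM : ∀ v, |φ v| ≤ M)
    {w : ℂ} (hw : r₀ + 1 ≤ ‖w‖) :
    (∫ v : ℂ, (φ v : ℂ) * (w - v)⁻¹)
      = (∫ y in Ioi (0:ℝ), y * φ ((y : ℝ) : ℂ)) • (2 * π / w) := by
  have hM0 : 0 ≤ M := le_trans (abs_nonneg _) (hM 0)
  set F : ℝ × ℝ → ℂ := fun p =>
    p.1 • ((φ (Complex.polarCoord.symm p) : ℂ) * (w - Complex.polarCoord.symm p)⁻¹) with hF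
  have hsymm_cont : Continuous fun p : ℝ × ℝ => Complex.polarCoord.symm p := by
    simp only [Complex.polarCoord_symm_apply]
    fun_prop
  have hFmeas : Measurable F := by
    apply Measurable.smul measurable_fst
    apply Measurable.mul
    · exact Complex.measurable_ofReal.comp (hφ.measurable.comp hsymm_cont.measurable)
    · exact (measurable_const.sub hsymm_cont.measurable).inv
  have habs : ∀ p : ℝ × ℝ, ‖Complex.polarCoord.symm p‖ = |p.1| := by
    intro p
    rw [Complex.norm_polarCoord_symm]
  set s' : Set (ℝ × ℝ) := Ioc (0:ℝ) r₀ ×ˢ Ioo (-π) π with hs'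
  have hmeas_s' : MeasurableSet s' := measurableSet_Ioc.prod measurableSet_Ioo
  have htarget : polarCoord.target = Ioi (0:ℝ) ×ˢ Ioo (-π) π := rfl
  have hbound : ∀ p ∈ s', ‖F p‖ ≤ r₀ * M := by
    intro p hp
    have hp1 : 0 < p.1 := hp.1.1
    have hp2 : p.1 ≤ r₀ := hp.1.2
    have hinv : ‖(w - Complex.polarCoord.symm p)⁻¹‖ ≤ 1 := by
      rw [norm_inv]
      have hge : 1 ≤ ‖w - Complex.polarCoord.symm p‖ := by
        have h1 := norm_sub_norm_le w (Complex.polarCoord.symm p)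
        rw [habs p, abs_of_pos hp1] at h1
        linarith
      exact inv_le_one_of_one_le₀ hge
    have : ‖F p‖ = |p.1| * (|φ (Complex.polarCoord.symm p)| *
        ‖(w - Complex.polarCoord.symm p)⁻¹‖) := by
      rw [hF, norm_smul, norm_mul, Real.norm_eq_abs, Complex.norm_real, Real.norm_eq_abs]
    rw [this, abs_of_pos hp1]
    calc p.1 * (|φ (Complex.polarCoord.symm p)| * ‖(w - Complex.polarCoord.symm p)⁻¹‖)
        ≤ r₀ * (M * 1) := by
          apply mul_le_mul hp2 _ (by positivity) hr₀
          exact mul_le_mul (hM _) hinv (norm_nonneg _) hM0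
      _ = r₀ * M := by ring
  have hint_s' : IntegrableOn F s' := by
    apply Measure.integrableOn_of_bounded (M := r₀ * M)
    · rw [hs', Measure.volume_eq_prod, Measure.prod_prod]
      exact ENNReal.mul_ne_top (by simp [Real.volume_Ioc]) (by simp [Real.volume_Ioo])
    · exact hFmeas.aestronglyMeasurable
    · exact (ae_restrict_mem hmeas_s').mono hbound
  have hzero : Set.EqOn F 0 (polarCoord.target \ s') := by
    intro p hp
    obtain ⟨hpt, hps⟩ := hp
    rw [htarget] at hpt
    have hp1 : 0 < p.1 := hpt.1
    have hp2 : p.2 ∈ Ioo (-π) π := hpt.2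
    have hgt : r₀ < p.1 := by
      by_contra h
      exact hps ⟨⟨hp1, le_of_not_gt h⟩, hp2⟩
    have : φ (Complex.polarCoord.symm p) = 0 := by
      apply hsupp
      rw [habs p, abs_of_pos hp1]
      exact hgt
    show F p = 0
    rw [hF]
    simp only [this, Complex.ofReal_zero, zero_mul, smul_zero]
  have hint_target : IntegrableOn F polarCoord.target := by
    have hu : IntegrableOn F (s' ∪ polarCoord.target \ s') := by
      apply IntegrableOn.union hint_s'
      exact (integrableOn_congr_fun hzero
        (polarCoord.open_target.measurableSet.diff hmeas_s')).mpr (integrableOn_zero)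
    apply hu.mono_set
    intro p hp
    by_cases h : p ∈ s'
    · exact Or.inl h
    · exact Or.inr ⟨hp, h⟩
  calc (∫ v : ℂ, (φ v : ℂ) * (w - v)⁻¹)
      = ∫ p in polarCoord.target, F p := (Complex.integral_comp_polarCoord_symm _).symm
    _ = ∫ r in Ioi (0:ℝ), ∫ θ in Ioo (-π) π, F (r, θ) := by
        rw [htarget, Measure.volume_eq_prod]
        apply setIntegral_prod
        rw [← Measure.volume_eq_prod, ← htarget]
        exact hint_target
    _ = ∫ r in Ioi (0:ℝ), (r * φ ((r : ℝ) : ℂ)) • (2 * π / w) := by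
        apply setIntegral_congr_fun measurableSet_Ioi
        intro r hr
        have hr0 : (0:ℝ) < r := hr
        have hnr : ‖((r : ℝ) : ℂ)‖ = r := by
          rw [Complex.norm_real, Real.norm_eq_abs, abs_of_pos hr0]
        have hstep : ∀ θ : ℝ, F (r, θ)
            = (r * φ ((r : ℝ) : ℂ)) • ((w - Complex.polarCoord.symm (r, θ))⁻¹) := by
          intro θ
          have hφθ : φ (Complex.polarCoord.symm (r, θ)) = φ ((r : ℝ) : ℂ) := by
            apply hrot
            rw [habs (r, θ), hnr]
            exact abs_of_pos hr0
          rw [hF]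
          simp only
          rw [hφθ, Complex.real_smul, Complex.real_smul]
          push_cast
          ring
        calc ∫ θ in Ioo (-π) π, F (r, θ)
            = ∫ θ in Ioo (-π) π,
                (r * φ ((r : ℝ) : ℂ)) • ((w - Complex.polarCoord.symm (r, θ))⁻¹) := by
              simp only [hstep]
          _ = (r * φ ((r : ℝ) : ℂ)) • ∫ θ in Ioo (-π) π,
                (w - Complex.polarCoord.symm (r, θ))⁻¹ := integral_smul _ _
          _ = (r * φ ((r : ℝ) : ℂ)) • (2 * π / w) := by
              by_cases hz : φ ((r : ℝ) : ℂ) = 0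
              · simp [hz]
              · have hrle : r ≤ r₀ := by
                  by_contra h
                  exact hz (hsupp _ (by rw [hnr]; exact lt_of_not_ge h))
                rw [integral_circle_inv hr0 (by linarith)]
    _ = (∫ r in Ioi (0:ℝ), r * φ ((r : ℝ) : ℂ)) • (2 * π / w) := integral_smul_const _ _

lemma radial_mass (φ : ℂ → ℝ) (hrot : ∀ x y : ℂ, ‖x‖ = ‖y‖ → φ x = φ y)
    (hint : (∫ x : ℂ, φ x) = 1) :
    ∫ y in Ioi (0:ℝ), y * φ ((y : ℝ) : ℂ) = (2 * π)⁻¹ := by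
  have h := integral_fun_norm_addHaar (volume : Measure ℂ) (fun y : ℝ => φ ((y : ℝ) : ℂ))
  rw [Complex.finrank_real_complex, measureReal_def, vol_ball_one] at h
  have hl : (∫ x : ℂ, φ ((‖x‖ : ℝ) : ℂ)) = 1 := by
    rw [← hint]
    apply integral_congr_ae
    apply Filter.Eventually.of_forall
    intro x
    apply hrot
    rw [Complex.norm_real, Real.norm_eq_abs, abs_of_nonneg (norm_nonneg x)]
  rw [hl] at h
  simp only [pow_one, smul_eq_mul, nsmul_eq_mul, Nat.cast_ofNat] at h
  norm_num at h
  have hπ : (0:ℝ) < π := Real.pi_pos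
  field_simp
  linarith

lemma annulus_int {a R : ℝ} (ha : 0 < a) (haR : a ≤ R) :
    ∫ w in Metric.ball (0:ℂ) R \ Metric.ball 0 a, ‖theta w‖ ^ 2
      = (Real.log R - Real.log a) / (2 * π) := by
  have hR : 0 < R := lt_of_lt_of_le ha haR
  have hπ : (0:ℝ) < π := Real.pi_pos
  set A : Set ℂ := Metric.ball (0:ℂ) R \ Metric.ball 0 a with hA
  have hmeasA : MeasurableSet A := measurableSet_ball.diff measurableSet_ball
  set f : ℝ → ℝ := (Ico a R).indicator (fun t => ((2 * π)⁻¹ * t⁻¹) ^ 2) with hf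
  have hind : ∀ w : ℂ, A.indicator (fun w => ‖theta w‖ ^ 2) w = f ‖w‖ := by
    intro w
    by_cases hw : w ∈ A
    · have hw' : ‖w‖ ∈ Ico a R :=
        ⟨le_of_not_gt fun h => hw.2 (mem_ball_zero_iff.2 h), mem_ball_zero_iff.1 hw.1⟩
      rw [Set.indicator_of_mem hw, hf, Set.indicator_of_mem hw', norm_theta]
    · have hw' : ‖w‖ ∉ Ico a R := by
        intro h
        exact hw ⟨mem_ball_zero_iff.2 h.2, fun hmem => absurd (mem_ball_zero_iff.1 hmem)
          (not_lt.2 h.1)⟩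
      rw [Set.indicator_of_notMem hw, hf, Set.indicator_of_notMem hw']
  have hys : ∀ y ∈ Ioi (0:ℝ), y ^ 1 • f y
      = (Ico a R).indicator (fun t => ((2 * π)⁻¹) ^ 2 * t⁻¹) y := by
    intro y hy
    have hy0 : (0:ℝ) < y := hy
    by_cases h : y ∈ Ico a R
    · rw [hf]
      rw [Set.indicator_of_mem h, Set.indicator_of_mem h]
      simp only [pow_one, smul_eq_mul]
      field_simp
    · rw [hf, Set.indicator_of_notMem h, Set.indicator_of_notMem h]
      simp
  calc ∫ w in A, ‖theta w‖ ^ 2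
      = ∫ w : ℂ, A.indicator (fun w => ‖theta w‖ ^ 2) w := (integral_indicator hmeasA).symm
    _ = ∫ w : ℂ, f ‖w‖ := by simp only [hind]
    _ = 2 • (π • ∫ y in Ioi (0:ℝ), y ^ 1 • f y) := by
        rw [integral_fun_norm_addHaar (volume : Measure ℂ) f, Complex.finrank_real_complex,
          measureReal_def, vol_ball_one]
    _ = (Real.log R - Real.log a) / (2 * π) := by
        have hinter : Ioi (0:ℝ) ∩ Ico a R = Ico a R :=
          Set.inter_eq_self_of_subset_right (fun y hy => lt_of_lt_of_le ha hy.1)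
        rw [setIntegral_congr_fun measurableSet_Ioi hys, setIntegral_indicator measurableSet_Ico,
          hinter,
          MeasureTheory.integral_const_mul, MeasureTheory.integral_Ico_eq_integral_Ioo,
          ← MeasureTheory.integral_Ioc_eq_integral_Ioo,
          ← intervalIntegral.integral_of_le haR, integral_inv_of_pos ha hR,
          Real.log_div hR.ne' ha.ne']
        simp only [nsmul_eq_mul, smul_eq_mul, Nat.cast_ofNat]
        field_simp

lemma conv_eq_theta (φ : ℂ → ℝ) (hφ : Continuous φ)
    (hrot : ∀ x y : ℂ, ‖x‖ = ‖y‖ → φ x = φ y) (hint : (∫ x : ℂ, φ x) = 1)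
    {r₀ : ℝ} (hr₀ : 0 ≤ r₀) (hsupp : ∀ v : ℂ, r₀ < ‖v‖ → φ v = 0)
    {M : ℝ} (hM : ∀ v, |φ v| ≤ M) {w : ℂ} (hw : r₀ + 1 ≤ ‖w‖) :
    convTheta φ w = theta w := by
  have hw0 : w ≠ 0 := by
    intro h
    rw [h, norm_zero] at hw
    linarith
  have hπ : ((π : ℝ) : ℂ) ≠ 0 := by exact_mod_cast Real.pi_ne_zero
  have hK : (∫ v : ℂ, (φ v : ℂ) * (w - v)⁻¹) = w⁻¹ := by
    rw [cauchy_transform φ hφ hrot hr₀ hsupp hM hw, radial_mass φ hrot hint,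
      Complex.real_smul]
    push_cast
    field_simp
  have hstep : ∀ v : ℂ, φ v • theta (w - v)
      = (starRingEnd ℂ) (-((2 * π)⁻¹ • (Complex.I * ((φ v : ℂ) * (w - v)⁻¹)))) := by
    intro v
    have h1 : (starRingEnd ℂ) (φ v • theta (w - v))
        = -((2 * π)⁻¹ • (Complex.I * ((φ v : ℂ) * (w - v)⁻¹))) := by
      rw [Complex.real_smul, map_mul, Complex.conj_ofReal, conj_theta,
        Complex.real_smul, Complex.real_smul]
      push_cast
      ring
    have := congrArg (starRingEnd ℂ) h1
    rwa [Complex.conj_conj] at this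
  calc convTheta φ w
      = ∫ v : ℂ, φ v • theta (w - v) := rfl
    _ = ∫ v : ℂ, (starRingEnd ℂ) (-((2 * π)⁻¹ • (Complex.I * ((φ v : ℂ) * (w - v)⁻¹)))) := by
        simp only [hstep]
    _ = (starRingEnd ℂ) (∫ v : ℂ, -((2 * π)⁻¹ • (Complex.I * ((φ v : ℂ) * (w - v)⁻¹)))) :=
        integral_conj
    _ = (starRingEnd ℂ) (-((2 * π)⁻¹ • (Complex.I * w⁻¹))) := by
        rw [MeasureTheory.integral_neg, integral_smul, MeasureTheory.integral_const_mul, hK]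
    _ = theta w := by
        rw [theta_eq, map_neg, Complex.real_smul, Complex.real_smul, map_mul,
          Complex.conj_ofReal, map_mul, Complex.conj_I, map_inv₀]
        ring

end Stmt14Aux

open Stmt14Aux Set Metric in
theorem stmt14 (φ : ℂ → ℝ) (hφ : ContDiff ℝ (⊤ : ℕ∞) φ) (hc : HasCompactSupport φ)
    (hpos : ∀ x, 0 ≤ φ x) (hrot : ∀ x y : ℂ, ‖x‖ = ‖y‖ → φ x = φ y)
    (hint : (∫ x : ℂ, φ x) = 1) :
    ∃ C : ℝ, ∀ R : ℝ, 1 ≤ R →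
      |(∫ w in Metric.ball (0:ℂ) R, ‖convTheta φ w‖ ^ 2) -
          Real.log R / (2 * Real.pi)| ≤ C := by
  classical
  have hφc : Continuous φ := hφ.continuous
  obtain ⟨r, hr⟩ := hc.isBounded.subset_closedBall 0
  set r₀ : ℝ := max r 0 with hr₀def
  have hr₀ : 0 ≤ r₀ := le_max_right _ _
  have hsupp : ∀ v : ℂ, r₀ < ‖v‖ → φ v = 0 := by
    intro v hv
    by_contra h
    have h1 : v ∈ tsupport φ := subset_tsupport φ h
    have h2 := hr h1
    rw [Metric.mem_closedBall, dist_zero_right] at h2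
    have : ‖v‖ ≤ r₀ := le_trans h2 (le_max_left _ _)
    linarith
  obtain ⟨M, hM⟩ := hφc.bounded_above_of_compact_support hc
  have hM' : ∀ v, |φ v| ≤ M := fun v => by rw [← Real.norm_eq_abs]; exact hM v
  set a : ℝ := r₀ + 1 with ha_def
  have ha1 : 1 ≤ a := by simp [ha_def]; linarith
  have ha0 : 0 < a := by linarith
  have hconv : ∀ w : ℂ, a ≤ ‖w‖ → convTheta φ w = theta w := fun w hw =>
    conv_eq_theta φ hφc hrot hint hr₀ hsupp hM' hw
  have hcont : Continuous (convTheta φ) := cont_conv φ hφc hc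
  have hcont2 : Continuous fun w : ℂ => ‖convTheta φ w‖ ^ 2 := hcont.norm.pow 2
  have hIntOn : ∀ R : ℝ, IntegrableOn (fun w => ‖convTheta φ w‖ ^ 2)
      (Metric.closedBall (0:ℂ) R) :=
    fun R => hcont2.continuousOn.integrableOn_compact (isCompact_closedBall _ _)
  set C₀ : ℝ := ∫ w in Metric.ball (0:ℂ) a, ‖convTheta φ w‖ ^ 2 with hC₀
  have hC₀0 : 0 ≤ C₀ := setIntegral_nonneg measurableSet_ball fun w _ => by positivity
  have hπ : (0:ℝ) < π := Real.pi_pos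
  have hCa0 : 0 ≤ Real.log a / (2 * π) := div_nonneg (Real.log_nonneg ha1) (by positivity)
  refine ⟨C₀ + Real.log a / (2 * π), fun R hR => ?_⟩
  have hR0 : 0 < R := by linarith
  by_cases hcase : R ≤ a
  · have h1 : 0 ≤ ∫ w in Metric.ball (0:ℂ) R, ‖convTheta φ w‖ ^ 2 :=
      setIntegral_nonneg measurableSet_ball fun w _ => by positivity
    have h2 : (∫ w in Metric.ball (0:ℂ) R, ‖convTheta φ w‖ ^ 2) ≤ C₀ := by
      apply setIntegral_mono_set ((hIntOn a).mono_set Metric.ball_subset_closedBall)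
        (Filter.Eventually.of_forall fun w => by positivity)
        (HasSubset.Subset.eventuallyLE (Metric.ball_subset_ball hcase))
    have h3 : 0 ≤ Real.log R / (2 * π) := div_nonneg (Real.log_nonneg hR) (by positivity)
    have h4 : Real.log R / (2 * π) ≤ Real.log a / (2 * π) := by
      gcongr
    rw [abs_sub_le_iff]
    constructor <;> linarith
  · push_neg at hcase
    have hsub : Metric.ball (0:ℂ) a ⊆ Metric.ball (0:ℂ) R :=
      Metric.ball_subset_ball (le_of_lt hcase)
    have hunion : Metric.ball (0:ℂ) R
        = Metric.ball (0:ℂ) a ∪ (Metric.ball (0:ℂ) R \ Metric.ball (0:ℂ) a) :=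
      (Set.union_diff_cancel hsub).symm
    have hi1 : IntegrableOn (fun w => ‖convTheta φ w‖ ^ 2) (Metric.ball (0:ℂ) a) :=
      (hIntOn a).mono_set Metric.ball_subset_closedBall
    have hi2 : IntegrableOn (fun w => ‖convTheta φ w‖ ^ 2)
        (Metric.ball (0:ℂ) R \ Metric.ball 0 a) :=
      (hIntOn R).mono_set fun w hw => Metric.ball_subset_closedBall hw.1
    have hsplit : (∫ w in Metric.ball (0:ℂ) R, ‖convTheta φ w‖ ^ 2)
        = C₀ + ∫ w in Metric.ball (0:ℂ) R \ Metric.ball 0 a, ‖convTheta φ w‖ ^ 2 := by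
      rw [hC₀, ← setIntegral_union Set.disjoint_sdiff_right
        (measurableSet_ball.diff measurableSet_ball) hi1 hi2, ← hunion]
    have hdiff : (∫ w in Metric.ball (0:ℂ) R \ Metric.ball 0 a, ‖convTheta φ w‖ ^ 2)
        = (Real.log R - Real.log a) / (2 * π) := by
      rw [← annulus_int ha0 (le_of_lt hcase)]
      apply setIntegral_congr_fun (measurableSet_ball.diff measurableSet_ball)
      intro w hw
      have hwa : a ≤ ‖w‖ := le_of_not_gt fun h => hw.2 (mem_ball_zero_iff.2 h)
      show ‖convTheta φ w‖ ^ 2 = ‖theta w‖ ^ 2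
      rw [hconv w hwa]
    rw [hsplit, hdiff]
    have heq : C₀ + (Real.log R - Real.log a) / (2 * π) - Real.log R / (2 * π)
        = C₀ - Real.log a / (2 * π) := by ring
    rw [heq, abs_le]
    constructor <;> linarith
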